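/- arXiv:1606.02005 — 6 statements merged into one kernel-verified Lean document; each statement's English description precedes it below -/
import Mathlib

section
/- Define r(t,x) = min(Φ⁻¹(t⁻¹)^d, t Φ(|x|⁻¹)/|x|^d) and ρ(t,x) = Φ((1/Φ⁻¹(t⁻¹) + |x|)⁻¹) · (1/Φ⁻¹(t⁻¹) + |x|)^{-d}. Then for all t > 0 and x ∈ ℝ^d: t ρ(t,x) ≤ r(t,x) ≤ 2^{d+2} t ρ(t,x). -/
open Real
open scoped Classical

/-- The function `ρ(t,x) = Φ((1/Φ⁻¹(t⁻¹) + |x|)⁻¹) (1/Φ⁻¹(t⁻¹) + |x|)^{-d}`. -/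
noncomputable def rho (d : ℕ) (Φ Φinv : ℝ → ℝ) (t : ℝ)
    (x : EuclideanSpace ℝ (Fin d)) : ℝ :=
  Φ (((Φinv t⁻¹)⁻¹ + ‖x‖)⁻¹) / ((Φinv t⁻¹)⁻¹ + ‖x‖) ^ d

/-- The function `r(t,x) = min(Φ⁻¹(t⁻¹)^d, t Φ(|x|⁻¹)/|x|^d)`, interpreted as
`Φ⁻¹(t⁻¹)^d` at `x = 0`. -/
noncomputable def rfun (d : ℕ) (Φ Φinv : ℝ → ℝ) (t : ℝ)
    (x : EuclideanSpace ℝ (Fin d)) : ℝ :=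
  if x = 0 then (Φinv t⁻¹) ^ d
  else min ((Φinv t⁻¹) ^ d) (t * Φ (‖x‖⁻¹) / ‖x‖ ^ d)

open Set

/-!
With `R = 1 / Φ⁻¹(t⁻¹)` and `g(w) = Φ(w⁻¹) w^{-d}` one has `ρ(t,x) = g(R + |x|)`,
`Φ⁻¹(t⁻¹)^d = t g(R)` and `t Φ(|x|⁻¹)/|x|^d = t g(|x|)`, so `r(t,x) = t min(g(R), g(|x|))`.
Since `g` is decreasing, `g(R + |x|) ≤ min(g(R), g(|x|))`. Conversely `R + |x| ≤ 2 max(R, |x|)`,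
and the doubling bound `Φ(2s) ≤ 4 Φ(s)` gives `g(w) ≤ 2^{d+2} g(u)` whenever `w ≤ u ≤ 2w`.
-/

noncomputable def profile (d : ℕ) (Φ : ℝ → ℝ) (w : ℝ) : ℝ :=
  Φ w⁻¹ / w ^ d

section Profile

variable {d : ℕ} {Φ : ℝ → ℝ}

theorem profile_antitoneOn (hΦpos : ∀ t : ℝ, 0 < t → 0 < Φ t)
    (hmono : MonotoneOn Φ (Ioi 0)) : AntitoneOn (profile d Φ) (Ioi 0) := by
  intro w hw u hu hwu
  have hw : 0 < w := hw
  have hu : 0 < u := hu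
  exact div_le_div₀ (hΦpos _ (inv_pos.mpr hw)).le
    (hmono (inv_pos.mpr hu) (inv_pos.mpr hw) (inv_anti₀ hw hwu))
    (pow_pos hw d) (pow_le_pow_left₀ hw.le hwu d)

theorem profile_le_of_le_two_mul (hΦpos : ∀ t : ℝ, 0 < t → 0 < Φ t)
    (hmono : MonotoneOn Φ (Ioi 0))
    (hup : ∀ lam r : ℝ, 1 ≤ lam → 0 < r → Φ (lam * r) ≤ lam ^ 2 * Φ r)
    {w u : ℝ} (hw : 0 < w) (hwu : w ≤ u) (hu2 : u ≤ 2 * w) :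
    profile d Φ w ≤ 2 ^ (d + 2) * profile d Φ u := by
  have hu : 0 < u := hw.trans_le hwu
  have hdouble : Φ w⁻¹ ≤ 4 * Φ (2 * w)⁻¹ := by
    have h := hup 2 (2 * w)⁻¹ one_le_two (by positivity)
    rw [show (2 : ℝ) * (2 * w)⁻¹ = w⁻¹ by field_simp] at h
    linarith
  have hΦ : Φ w⁻¹ ≤ 4 * Φ u⁻¹ :=
    hdouble.trans <| by
      gcongr
      exact hmono (mem_Ioi.mpr (by positivity)) (inv_pos.mpr hu) (inv_anti₀ hu hu2)
  rw [profile, profile, div_le_iff₀ (pow_pos hw d)]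
  calc Φ w⁻¹ ≤ 4 * Φ u⁻¹ := hΦ
    _ = 2 ^ (d + 2) * (Φ u⁻¹ / (2 * w) ^ d) * w ^ d := by
        field_simp
        ring
    _ ≤ 2 ^ (d + 2) * (Φ u⁻¹ / u ^ d) * w ^ d := by
        have := (hΦpos _ (inv_pos.mpr hu)).le
        gcongr

theorem profile_add_le_min (hΦpos : ∀ t : ℝ, 0 < t → 0 < Φ t)
    (hmono : MonotoneOn Φ (Ioi 0)) {a b : ℝ} (ha : 0 < a) (hb : 0 < b) :
    profile d Φ (a + b) ≤ min (profile d Φ a) (profile d Φ b) := by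
  have hanti := profile_antitoneOn (d := d) hΦpos hmono
  have hab : a + b ∈ Ioi 0 := mem_Ioi.mpr (by positivity)
  exact le_min (hanti ha hab (by linarith)) (hanti hb hab (by linarith))

theorem min_profile_le_profile_add (hΦpos : ∀ t : ℝ, 0 < t → 0 < Φ t)
    (hmono : MonotoneOn Φ (Ioi 0))
    (hup : ∀ lam r : ℝ, 1 ≤ lam → 0 < r → Φ (lam * r) ≤ lam ^ 2 * Φ r)
    {a b : ℝ} (ha : 0 < a) (hb : 0 < b) :
    min (profile d Φ a) (profile d Φ b) ≤ 2 ^ (d + 2) * profile d Φ (a + b) := by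
  rcases le_total a b with hab | hba
  · exact (min_le_right _ _).trans
      (profile_le_of_le_two_mul hΦpos hmono hup hb (by linarith) (by linarith))
  · exact (min_le_left _ _).trans
      (profile_le_of_le_two_mul hΦpos hmono hup ha (by linarith) (by linarith))

theorem mul_profile_inv_eq {t a : ℝ} (ht : t ≠ 0) (hΦa : Φ a = t⁻¹) :
    t * profile d Φ a⁻¹ = a ^ d := by
  rw [profile, inv_inv, hΦa, inv_pow, div_inv_eq_mul, ← mul_assoc, mul_inv_cancel₀ ht, one_mul]

end Profile

theorem stmt_4_general (d : ℕ) (Φ Φinv : ℝ → ℝ)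
    (hΦpos : ∀ t : ℝ, 0 < t → 0 < Φ t)
    (hΦmono : ∀ s t : ℝ, 0 < s → s < t → Φ s < Φ t)
    (hinvpos : ∀ r : ℝ, 0 < r → 0 < Φinv r)
    (hright : ∀ r : ℝ, 0 < r → Φ (Φinv r) = r)
    (hup : ∀ lam r : ℝ, 1 ≤ lam → 0 < r → Φ (lam * r) ≤ lam ^ 2 * Φ r) :
    ∀ t : ℝ, 0 < t → ∀ x : EuclideanSpace ℝ (Fin d),
      t * rho d Φ Φinv t x ≤ rfun d Φ Φinv t x ∧
      rfun d Φ Φinv t x ≤ 2 ^ (d + 2) * (t * rho d Φ Φinv t x) := by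
  intro t ht x
  have hmono : MonotoneOn Φ (Ioi 0) :=
    StrictMonoOn.monotoneOn fun s hs u _ hsu => hΦmono s u hs hsu
  set R := (Φinv t⁻¹)⁻¹
  have hR : 0 < R := inv_pos.mpr (hinvpos _ (inv_pos.mpr ht))
  have hscale : Φinv t⁻¹ ^ d = t * profile d Φ R :=
    (mul_profile_inv_eq ht.ne' (hright _ (inv_pos.mpr ht))).symm
  have hρ : rho d Φ Φinv t x = profile d Φ (R + ‖x‖) := rfl
  rw [hρ, mul_left_comm]
  by_cases hx : x = 0
  · subst hx
    rw [rfun, if_pos rfl, hscale, norm_zero, add_zero]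
    exact ⟨le_rfl, mul_le_mul_of_nonneg_left
      (profile_le_of_le_two_mul hΦpos hmono hup hR le_rfl (by linarith)) ht.le⟩
  have hxpos : 0 < ‖x‖ := norm_pos_iff.mpr hx
  rw [rfun, if_neg hx, hscale, mul_div_assoc, ← profile, ← mul_min_of_nonneg _ _ ht.le]
  exact ⟨mul_le_mul_of_nonneg_left (profile_add_le_min hΦpos hmono hR hxpos) ht.le,
    mul_le_mul_of_nonneg_left (min_profile_le_profile_add hΦpos hmono hup hR hxpos) ht.le⟩

/-- For all `t > 0` and `x ∈ ℝ^d`: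
`t ρ(t,x) ≤ r(t,x) ≤ 2^{d+2} t ρ(t,x)`. -/
theorem stmt_4 (d : ℕ) (hd : 1 ≤ d) (Φ Φinv : ℝ → ℝ)
    (hΦpos : ∀ t : ℝ, 0 < t → 0 < Φ t)
    (hΦmono : ∀ s t : ℝ, 0 < s → s < t → Φ s < Φ t)
    (hinvpos : ∀ r : ℝ, 0 < r → 0 < Φinv r)
    (hleft : ∀ t : ℝ, 0 < t → Φinv (Φ t) = t)
    (hright : ∀ r : ℝ, 0 < r → Φ (Φinv r) = r)
    (hup : ∀ lam r : ℝ, 1 ≤ lam → 0 < r → Φ (lam * r) ≤ lam ^ 2 * Φ r) :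
    ∀ t : ℝ, 0 < t → ∀ x : EuclideanSpace ℝ (Fin d),
      t * rho d Φ Φinv t x ≤ rfun d Φ Φinv t x ∧
      rfun d Φ Φinv t x ≤ 2 ^ (d + 2) * (t * rho d Φ Φinv t x) :=
  stmt_4_general d Φ Φinv hΦpos hΦmono hinvpos hright hup
end

section
/- Let T ≥ 1 and set c = (2(2/a₁)^{1/δ₁}/Φ⁻¹((2T)⁻¹))^{d+2}. Define ρ(t,x) = Φ((1/Φ⁻¹(t⁻¹)+|x|)⁻¹)(1/Φ⁻¹(t⁻¹)+|x|)^{-d}. Then for all 0 < s < t ≤ T and x, z ∈ ℝ^d: ρ(t-s, x-z) ρ(s, z) ≤ c (ρ(t-s, x-z) + ρ(s, z)) ρ(t, x). -/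
open Real

/-!
Write `ρ(t, x) = f(h(t) + |x|)` with `h(t) = 1/Φ⁻¹(1/t)` and `f(r) = Φ(1/r) r^{-d}`; `f` is
decreasing and `h` increasing. The lower scaling condition gives the doubling bound
`h(2m) ≤ (A/Q) h(m)` for `m ≤ T`, where `A = (2/a₁)^{1/δ₁}` and `Q = Φ⁻¹((2T)⁻¹)`. Since `t` is
at most twice `max(s, t - s)` and `|x| ≤ |x - z| + |z|`, the argument of `ρ(t, x)` is at most
`K = 2A/Q` times the larger argument `M` of the two factors on the left, so by the upper scaling
`min(ρ(t-s, x-z), ρ(s, z)) = f(M) ≤ K^{d+2} f(K M) ≤ K^{d+2} ρ(t, x)`; and `ab ≤ min(a,b)(a+b)`.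
-/

open Set

lemma mul_le_mul_add_mul_of_min_le {a b c w : ℝ} (ha : 0 ≤ a) (hb : 0 ≤ b)
    (h : min a b ≤ c * w) : a * b ≤ c * (a + b) * w := by
  rcases min_cases a b with ⟨hmin, -⟩ | ⟨hmin, -⟩ <;> rw [hmin] at h <;> nlinarith

section Scaling

variable {Φ Φinv : ℝ → ℝ}

lemma Φinv_le_of_le_Φ (hΦ : StrictMonoOn Φ (Ioi 0)) (hinvpos : ∀ r, 0 < r → 0 < Φinv r)
    (hright : ∀ r, 0 < r → Φ (Φinv r) = r) {r y : ℝ} (hr : 0 < r) (hy : 0 < y)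
    (h : r ≤ Φ y) : Φinv r ≤ y :=
  (hΦ.le_iff_le (hinvpos r hr) hy).1 (by rwa [hright r hr])

lemma Φinv_monotoneOn (hΦ : StrictMonoOn Φ (Ioi 0)) (hinvpos : ∀ r, 0 < r → 0 < Φinv r)
    (hright : ∀ r, 0 < r → Φ (Φinv r) = r) : MonotoneOn Φinv (Ioi 0) :=
  fun _ h₁ r₂ h₂ h₁₂ =>
    Φinv_le_of_le_Φ hΦ hinvpos hright h₁ (hinvpos r₂ h₂) (by rwa [hright r₂ h₂])

lemma inv_Φinv_inv_monotoneOn (hΦ : StrictMonoOn Φ (Ioi 0))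
    (hinvpos : ∀ r, 0 < r → 0 < Φinv r) (hright : ∀ r, 0 < r → Φ (Φinv r) = r) :
    MonotoneOn (fun t => (Φinv t⁻¹)⁻¹) (Ioi 0) := fun _ h₁ _ h₂ h₁₂ =>
  inv_anti₀ (hinvpos _ (inv_pos.2 h₂)) <|
    Φinv_monotoneOn hΦ hinvpos hright (mem_Ioi.2 (inv_pos.2 h₂)) (mem_Ioi.2 (inv_pos.2 h₁))
      (inv_anti₀ h₁ h₁₂)

lemma inv_Φinv_inv_pos (hinvpos : ∀ r, 0 < r → 0 < Φinv r) {t : ℝ} (ht : 0 < t) :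
    0 < (Φinv t⁻¹)⁻¹ :=
  inv_pos.2 (hinvpos _ (inv_pos.2 ht))

lemma inv_Φinv_inv_add_norm_pos {E : Type*} [SeminormedAddCommGroup E]
    (hinvpos : ∀ r, 0 < r → 0 < Φinv r) {t : ℝ} (ht : 0 < t) (x : E) :
    0 < (Φinv t⁻¹)⁻¹ + ‖x‖ :=
  add_pos_of_pos_of_nonneg (inv_Φinv_inv_pos hinvpos ht) (norm_nonneg x)

lemma le_div_Φinv_two_mul_inv (hΦ : StrictMonoOn Φ (Ioi 0)) (hΦ1 : Φ 1 = 1)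
    (hinvpos : ∀ r, 0 < r → 0 < Φinv r) (hright : ∀ r, 0 < r → Φ (Φinv r) = r)
    {A T : ℝ} (hA : 0 ≤ A) (hT : 1 ≤ T) : A ≤ A / Φinv (2 * T)⁻¹ :=
  le_div_self hA (hinvpos _ (by positivity)) <| Φinv_le_of_le_Φ hΦ hinvpos hright
    (by positivity) one_pos (by rw [hΦ1]; exact inv_le_one_of_one_le₀ (by linarith))

/-- The factor `A` turns the lower scaling constant `a₁` into a doubling of `Φ`; below `1`,
where lower scaling is unavailable, `Φ q ≤ 1` and the doubling is instead routed through `Φ A`. -/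
lemma two_mul_le_Φ_mul {a₁ δ₁ : ℝ} (ha₁ : 0 < a₁) (hδ₁ : 0 < δ₁)
    (hΦpos : ∀ t, 0 < t → 0 < Φ t) (hΦ : MonotoneOn Φ (Ioi 0)) (hΦ1 : Φ 1 = 1)
    (hlow : ∀ lam r : ℝ, 1 ≤ lam → 1 ≤ r → a₁ * lam ^ δ₁ * Φ r ≤ Φ (lam * r))
    {A lam q : ℝ} (hA : 1 ≤ A) (hA2 : 2 ≤ a₁ * A ^ δ₁) (hq : 0 < q) (hlam : A ≤ lam)
    (hlamq : A ≤ lam * q) : 2 * Φ q ≤ Φ (lam * q) := by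
  have hApos : 0 < A := by linarith
  rcases le_or_gt 1 q with hq1 | hq1
  · calc 2 * Φ q ≤ a₁ * A ^ δ₁ * Φ q := by gcongr; exact (hΦpos q hq).le
      _ ≤ a₁ * lam ^ δ₁ * Φ q := by gcongr; exact (hΦpos q hq).le
      _ ≤ Φ (lam * q) := hlow lam q (hA.trans hlam) hq1
  · calc 2 * Φ q ≤ 2 * Φ 1 := by gcongr; exact hΦ hq (mem_Ioi.2 one_pos) hq1.le
      _ ≤ a₁ * A ^ δ₁ * Φ 1 := by gcongr
      _ ≤ Φ (A * 1) := hlow A 1 hA le_rfl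
      _ ≤ Φ (lam * q) := hΦ (by simpa using hApos) (hApos.trans_le hlamq) (by simpa using hlamq)

lemma inv_Φinv_inv_two_mul_le {a₁ δ₁ : ℝ} (ha₁ : 0 < a₁) (hδ₁ : 0 < δ₁)
    (hΦpos : ∀ t, 0 < t → 0 < Φ t) (hΦ : StrictMonoOn Φ (Ioi 0)) (hΦ1 : Φ 1 = 1)
    (hinvpos : ∀ r, 0 < r → 0 < Φinv r) (hright : ∀ r, 0 < r → Φ (Φinv r) = r)
    (hlow : ∀ lam r : ℝ, 1 ≤ lam → 1 ≤ r → a₁ * lam ^ δ₁ * Φ r ≤ Φ (lam * r))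
    {A T m : ℝ} (hA : 1 ≤ A) (hA2 : 2 ≤ a₁ * A ^ δ₁) (hT : 1 ≤ T) (hm : 0 < m) (hmT : m ≤ T) :
    (Φinv (2 * m)⁻¹)⁻¹ ≤ A / Φinv (2 * T)⁻¹ * (Φinv m⁻¹)⁻¹ := by
  set Q := Φinv (2 * T)⁻¹
  set q := Φinv (2 * m)⁻¹
  have hQ : 0 < Q := hinvpos _ (by positivity)
  have hq : 0 < q := hinvpos _ (by positivity)
  have hQq : Q ≤ q := Φinv_monotoneOn hΦ hinvpos hright (by positivity : (0 : ℝ) < (2 * T)⁻¹)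
    (by positivity : (0 : ℝ) < (2 * m)⁻¹) (by gcongr)
  have hlam : A ≤ A / Q := le_div_Φinv_two_mul_inv hΦ hΦ1 hinvpos hright (by linarith) hT
  have hlamq : A ≤ A / Q * q := by
    rw [div_mul_eq_mul_div, le_div_iff₀ hQ]; exact mul_le_mul_of_nonneg_left hQq (by linarith)
  have hdouble : Φinv m⁻¹ ≤ A / Q * q := by
    refine Φinv_le_of_le_Φ hΦ hinvpos hright (inv_pos.2 hm) (by positivity) ?_
    calc m⁻¹ = 2 * Φ q := by rw [hright _ (by positivity)]; field_simp
      _ ≤ Φ (A / Q * q) := two_mul_le_Φ_mul ha₁ hδ₁ hΦpos hΦ.monotoneOn hΦ1 hlow hA hA2 hq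
          hlam hlamq
  have hp : 0 < Φinv m⁻¹ := hinvpos _ (inv_pos.2 hm)
  rw [← div_eq_mul_inv, le_div_iff₀ hp, inv_mul_le_iff₀ hq, mul_comm q]
  exact hdouble

lemma inv_Φinv_inv_add_norm_le {E : Type*} [SeminormedAddCommGroup E] {a₁ δ₁ : ℝ}
    (ha₁ : 0 < a₁) (hδ₁ : 0 < δ₁)
    (hΦpos : ∀ t, 0 < t → 0 < Φ t) (hΦ : StrictMonoOn Φ (Ioi 0)) (hΦ1 : Φ 1 = 1)
    (hinvpos : ∀ r, 0 < r → 0 < Φinv r) (hright : ∀ r, 0 < r → Φ (Φinv r) = r)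
    (hlow : ∀ lam r : ℝ, 1 ≤ lam → 1 ≤ r → a₁ * lam ^ δ₁ * Φ r ≤ Φ (lam * r))
    {A T s t : ℝ} (hA : 1 ≤ A) (hA2 : 2 ≤ a₁ * A ^ δ₁) (hT : 1 ≤ T) (hs : 0 < s)
    (hst : s < t) (htT : t ≤ T) (x z : E) :
    (Φinv t⁻¹)⁻¹ + ‖x‖ ≤
      2 * A / Φinv (2 * T)⁻¹ * max ((Φinv (t - s)⁻¹)⁻¹ + ‖x - z‖) ((Φinv s⁻¹)⁻¹ + ‖z‖) := by
  set h : ℝ → ℝ := fun τ => (Φinv τ⁻¹)⁻¹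
  set L := A / Φinv (2 * T)⁻¹
  have hh : MonotoneOn h (Ioi 0) := inv_Φinv_inv_monotoneOn hΦ hinvpos hright
  have hL : 1 ≤ L := hA.trans (le_div_Φinv_two_mul_inv hΦ hΦ1 hinvpos hright (by linarith) hT)
  set m := max s (t - s)
  have hm : 0 < m := hs.trans_le (le_max_left _ _)
  have htime : h t ≤ L * (h (t - s) + h s) := by
    have hm_le : h m ≤ h (t - s) + h s := by
      rcases max_cases s (t - s) with ⟨hms, -⟩ | ⟨hms, -⟩ <;> simp only [m, hms]
      · linarith [inv_Φinv_inv_pos hinvpos (sub_pos.2 hst)]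
      · linarith [inv_Φinv_inv_pos hinvpos hs]
    calc h t ≤ h (2 * m) := hh (hs.trans hst) (mem_Ioi.2 (by positivity))
            (by linarith [le_max_left s (t - s), le_max_right s (t - s)])
      _ ≤ L * h m := inv_Φinv_inv_two_mul_le ha₁ hδ₁ hΦpos hΦ hΦ1 hinvpos hright hlow hA hA2 hT
            hm (max_le (by linarith) (by linarith))
      _ ≤ L * (h (t - s) + h s) := by gcongr
  have hspace : ‖x‖ ≤ L * (‖x - z‖ + ‖z‖) :=
    (norm_le_norm_sub_add x z).trans (le_mul_of_one_le_left (by positivity) hL)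
  calc h t + ‖x‖ ≤ L * ((h (t - s) + ‖x - z‖) + (h s + ‖z‖)) := by linarith
    _ ≤ L * (2 * max (h (t - s) + ‖x - z‖) (h s + ‖z‖)) := by
        gcongr; linarith [le_max_left (h (t - s) + ‖x - z‖) (h s + ‖z‖),
          le_max_right (h (t - s) + ‖x - z‖) (h s + ‖z‖)]
    _ = 2 * A / Φinv (2 * T)⁻¹ * max (h (t - s) + ‖x - z‖) (h s + ‖z‖) := by
        simp only [L]; ring

lemma profile_antitoneOn_s8 (d : ℕ) (hΦpos : ∀ t, 0 < t → 0 < Φ t) (hΦ : MonotoneOn Φ (Ioi 0)) :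
    AntitoneOn (fun r : ℝ => Φ r⁻¹ / r ^ d) (Ioi 0) := fun _ h₁ _ h₂ h₁₂ =>
  div_le_div₀ (hΦpos _ (inv_pos.2 h₁)).le
    (hΦ (mem_Ioi.2 (inv_pos.2 h₂)) (mem_Ioi.2 (inv_pos.2 h₁)) (inv_anti₀ h₁ h₁₂))
    (pow_pos h₁ d) (pow_le_pow_left₀ (le_of_lt h₁) h₁₂ d)

lemma profile_pos (d : ℕ) (hΦpos : ∀ t, 0 < t → 0 < Φ t) {r : ℝ} (hr : 0 < r) :
    0 < Φ r⁻¹ / r ^ d :=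
  div_pos (hΦpos _ (inv_pos.2 hr)) (pow_pos hr d)

lemma profile_le_pow_mul_profile_mul (d : ℕ)
    (hup : ∀ lam r : ℝ, 1 ≤ lam → 0 < r → Φ (lam * r) ≤ lam ^ 2 * Φ r)
    {K M : ℝ} (hK : 1 ≤ K) (hM : 0 < M) :
    Φ M⁻¹ / M ^ d ≤ K ^ (d + 2) * (Φ (K * M)⁻¹ / (K * M) ^ d) := by
  have hK0 : 0 < K := by linarith
  have h := hup K (K * M)⁻¹ hK (by positivity)
  rw [show K * (K * M)⁻¹ = M⁻¹ by field_simp] at h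
  calc Φ M⁻¹ / M ^ d ≤ K ^ 2 * Φ (K * M)⁻¹ / M ^ d := by gcongr
    _ = K ^ (d + 2) * (Φ (K * M)⁻¹ / (K * M) ^ d) := by field_simp; ring

end Scaling

theorem stmt_8_general (d : ℕ) (Φ Φinv : ℝ → ℝ) (a₁ δ₁ : ℝ)
    (hδ₁ : 0 < δ₁) (ha₁ : 0 < a₁) (ha₂ : a₁ < 1)
    (hΦpos : ∀ t : ℝ, 0 < t → 0 < Φ t)
    (hΦmono : ∀ s t : ℝ, 0 < s → s < t → Φ s < Φ t)
    (hΦ1 : Φ 1 = 1)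
    (hinvpos : ∀ r : ℝ, 0 < r → 0 < Φinv r)
    (hright : ∀ r : ℝ, 0 < r → Φ (Φinv r) = r)
    (hup : ∀ lam r : ℝ, 1 ≤ lam → 0 < r → Φ (lam * r) ≤ lam ^ 2 * Φ r)
    (hlow : ∀ lam r : ℝ, 1 ≤ lam → 1 ≤ r → a₁ * lam ^ δ₁ * Φ r ≤ Φ (lam * r))
    (T : ℝ) (hT : 1 ≤ T) :
    ∀ s t : ℝ, 0 < s → s < t → t ≤ T → ∀ x z : EuclideanSpace ℝ (Fin d),
      rho d Φ Φinv (t - s) (x - z) * rho d Φ Φinv s z ≤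
        (2 * (2 / a₁) ^ ((1 : ℝ) / δ₁) / Φinv ((2 * T)⁻¹)) ^ (d + 2) *
          (rho d Φ Φinv (t - s) (x - z) + rho d Φ Φinv s z) * rho d Φ Φinv t x := by
  intro s t hs hst htT x z
  have hΦ : StrictMonoOn Φ (Ioi 0) := fun a ha b _ hab => hΦmono a b ha hab
  set A := (2 / a₁) ^ ((1 : ℝ) / δ₁)
  have hA : 1 ≤ A := one_le_rpow ((one_le_div ha₁).2 (by linarith)) (by positivity)
  have hA2 : a₁ * A ^ δ₁ = 2 := by
    rw [← rpow_mul (by positivity), one_div_mul_cancel hδ₁.ne', rpow_one]; field_simp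
  have hK : 1 ≤ 2 * A / Φinv (2 * T)⁻¹ := by
    rw [mul_div_assoc]
    linarith [le_div_Φinv_two_mul_inv hΦ hΦ1 hinvpos hright (zero_le_one.trans hA) hT]
  have hf := profile_antitoneOn_s8 d hΦpos hΦ.monotoneOn
  have hu := inv_Φinv_inv_add_norm_pos hinvpos (sub_pos.2 hst) (x - z)
  have hv := inv_Φinv_inv_add_norm_pos hinvpos hs z
  have hw := inv_Φinv_inv_add_norm_pos hinvpos (hs.trans hst) x
  refine mul_le_mul_add_mul_of_min_le (profile_pos d hΦpos hu).le (profile_pos d hΦpos hv).le ?_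
  rw [rho, rho, rho, ← hf.map_max hu hv]
  calc _ ≤ _ := profile_le_pow_mul_profile_mul d hup hK (hu.trans_le (le_max_left _ _))
    _ ≤ _ := mul_le_mul_of_nonneg_left (hf hw (mem_Ioi.2 (by positivity))
        (inv_Φinv_inv_add_norm_le ha₁ hδ₁ hΦpos hΦ hΦ1 hinvpos hright hlow hA hA2.ge hT hs hst
          htT x z)) (by positivity)

/-- for `T ≥ 1`, `c = (2(2/a₁)^{1/δ₁}/Φ⁻¹((2T)⁻¹))^{d+2}`, all
`0 < s < t ≤ T` and `x, z ∈ ℝ^d`: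
`ρ(t-s, x-z) ρ(s, z) ≤ c (ρ(t-s, x-z) + ρ(s, z)) ρ(t, x)`. -/
theorem stmt_8 (d : ℕ) (hd : 1 ≤ d) (Φ Φinv : ℝ → ℝ) (a₁ δ₁ : ℝ)
    (hδ₁ : 0 < δ₁) (hδ₂ : δ₁ ≤ 2) (ha₁ : 0 < a₁) (ha₂ : a₁ < 1)
    (hΦpos : ∀ t : ℝ, 0 < t → 0 < Φ t)
    (hΦmono : ∀ s t : ℝ, 0 < s → s < t → Φ s < Φ t)
    (hΦ1 : Φ 1 = 1)
    (hinvpos : ∀ r : ℝ, 0 < r → 0 < Φinv r)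
    (hleft : ∀ t : ℝ, 0 < t → Φinv (Φ t) = t)
    (hright : ∀ r : ℝ, 0 < r → Φ (Φinv r) = r)
    (hup : ∀ lam r : ℝ, 1 ≤ lam → 0 < r → Φ (lam * r) ≤ lam ^ 2 * Φ r)
    (hlow : ∀ lam r : ℝ, 1 ≤ lam → 1 ≤ r → a₁ * lam ^ δ₁ * Φ r ≤ Φ (lam * r))
    (T : ℝ) (hT : 1 ≤ T) :
    ∀ s t : ℝ, 0 < s → s < t → t ≤ T → ∀ x z : EuclideanSpace ℝ (Fin d),
      rho d Φ Φinv (t - s) (x - z) * rho d Φ Φinv s z ≤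
        (2 * (2 / a₁) ^ ((1 : ℝ) / δ₁) / Φinv ((2 * T)⁻¹)) ^ (d + 2) *
          (rho d Φ Φinv (t - s) (x - z) + rho d Φ Φinv s z) * rho d Φ Φinv t x :=
  stmt_8_general d Φ Φinv a₁ δ₁ hδ₁ ha₁ ha₂ hΦpos hΦmono hΦ1 hinvpos hright hup hlow T hT
end

section
/- Let β, γ ≥ 0 and η, θ ∈ ℝ with β/2 + 1 − θ > 0 and γ/2 + 1 − η > 0. Suppose Φ⁻¹ satisfies Φ⁻¹(λr) ≥ λ^{1/2}Φ⁻¹(r) for λ ≥ 1, r > 0. Then for every t > 0: ∫₀ᵗ u^{-η} Φ⁻¹(u⁻¹)^{-γ} (t−u)^{-θ} Φ⁻¹((t−u)⁻¹)^{-β} du ≤ B(β/2+1−θ, γ/2+1−η) · t^{1−η−θ} Φ⁻¹(t⁻¹)^{-γ−β}, where B denotes the Beta function. -/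
open Real MeasureTheory Set

/-!
Applying the lower scaling of `Φ⁻¹` with `λ = t / u` gives
`Φ⁻¹(u⁻¹)^{-γ} ≤ (u/t)^{γ/2} Φ⁻¹(t⁻¹)^{-γ}` for `0 < u ≤ t`, and likewise for `t - u`.
Hence the integrand is dominated by
`t^{-(γ+β)/2} Φ⁻¹(t⁻¹)^{-γ-β} · u^{γ/2-η} (t-u)^{β/2-θ}`,
whose integral over `(0, t)` is `t^{1-η-θ+(γ+β)/2}` times a Beta integral,
by the substitution `u = t(1 - s)`.
-/

lemma intervalIntegrable_rpow_mul_sub_rpow_half {p : ℝ} (hp : -1 < p) (q : ℝ) {t : ℝ}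
    (ht : 0 < t) :
    IntervalIntegrable (fun x : ℝ => x ^ p * (t - x) ^ q) volume 0 (t / 2) := by
  refine (intervalIntegral.intervalIntegrable_rpow' hp).mul_continuousOn ?_
  refine (continuousOn_const.sub continuousOn_id).rpow_const fun x hx => Or.inl ?_
  rw [uIcc_of_le (by positivity)] at hx
  exact (sub_pos.2 (show x < t by linarith [hx.2])).ne'

lemma intervalIntegrable_rpow_mul_sub_rpow {p q t : ℝ} (hp : -1 < p) (hq : -1 < q)
    (ht : 0 < t) :
    IntervalIntegrable (fun x : ℝ => x ^ p * (t - x) ^ q) volume 0 t := by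
  refine (intervalIntegrable_rpow_mul_sub_rpow_half hp q ht).trans ?_
  -- the right half is the left half with `p, q` swapped, reflected by `x ↦ t - x`
  have := (intervalIntegrable_rpow_mul_sub_rpow_half hq p ht).comp_sub_left t
  simp only [sub_zero, sub_sub_cancel] at this
  convert this.symm using 2 with x
  · exact mul_comm _ _
  · ring

lemma integral_rpow_mul_sub_rpow (p q : ℝ) {t : ℝ} (ht : 0 < t) :
    ∫ u in Ioo 0 t, u ^ p * (t - u) ^ q
      = t ^ (p + q + 1) * ∫ s in Ioo 0 1, s ^ q * (1 - s) ^ p := by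
  simp only [← integral_Ioc_eq_integral_Ioo, ← intervalIntegral.integral_of_le ht.le,
    ← intervalIntegral.integral_of_le zero_le_one]
  have hsub := intervalIntegral.integral_comp_sub_mul (a := 0) (b := 1)
    (fun u : ℝ => u ^ p * (t - u) ^ q) ht.ne' t
  simp only [mul_one, mul_zero, sub_self, sub_zero, sub_sub_cancel, smul_eq_mul] at hsub
  rw [eq_inv_mul_iff_mul_eq₀ ht.ne'] at hsub
  have hscaled : ∫ s in (0 : ℝ)..1, (t - t * s) ^ p * (t * s) ^ q
      = t ^ (p + q) * ∫ s in (0 : ℝ)..1, s ^ q * (1 - s) ^ p := by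
    rw [← intervalIntegral.integral_const_mul]
    refine intervalIntegral.integral_congr fun s hs => ?_
    rw [uIcc_of_le zero_le_one] at hs
    rw [show t - t * s = t * (1 - s) by ring, mul_rpow ht.le (by linarith [hs.2]),
      mul_rpow ht.le hs.1, rpow_add ht]
    ring
  rw [← hsub, hscaled, rpow_add_one ht.ne']
  ring

def LowerScaling (f : ℝ → ℝ) (α : ℝ) : Prop :=
  ∀ lam r : ℝ, 1 ≤ lam → 0 < r → lam ^ α * f r ≤ f (lam * r)

lemma LowerScaling.rpow_neg_inv_le {f : ℝ → ℝ} {α γ : ℝ} (hf : LowerScaling f α)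
    (hpos : ∀ r, 0 < r → 0 < f r) (hγ : 0 ≤ γ) {u t : ℝ} (hu : 0 < u) (hut : u ≤ t) :
    f u⁻¹ ^ (-γ) ≤ (u / t) ^ (α * γ) * f t⁻¹ ^ (-γ) := by
  have ht := hu.trans_le hut
  have hscaled := hf (t / u) t⁻¹ ((one_le_div hu).2 hut) (inv_pos.2 ht)
  rw [show t / u * t⁻¹ = u⁻¹ by field_simp] at hscaled
  have hft := hpos _ (inv_pos.2 ht)
  calc f u⁻¹ ^ (-γ) ≤ ((t / u) ^ α * f t⁻¹) ^ (-γ) :=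
        rpow_le_rpow_of_nonpos (by positivity) hscaled (neg_nonpos.2 hγ)
    _ = (u / t) ^ (α * γ) * f t⁻¹ ^ (-γ) := by
        rw [mul_rpow (by positivity) hft.le, ← rpow_mul (by positivity), mul_neg,
          rpow_neg (by positivity), ← inv_rpow (by positivity), inv_div]

lemma LowerScaling.convolution_integrand_le {f : ℝ → ℝ} {α β γ η θ : ℝ}
    (hf : LowerScaling f α) (hpos : ∀ r, 0 < r → 0 < f r) (hβ : 0 ≤ β) (hγ : 0 ≤ γ)
    {u t : ℝ} (hu : 0 < u) (hut : u < t) :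
    u ^ (-η) * f u⁻¹ ^ (-γ) * (t - u) ^ (-θ) * f (t - u)⁻¹ ^ (-β)
      ≤ u ^ (α * γ - η) * (t - u) ^ (α * β - θ)
          * (t ^ (-(α * (γ + β))) * f t⁻¹ ^ (-γ - β)) := by
  have htu : 0 < t - u := sub_pos.2 hut
  have ht : 0 < t := hu.trans hut
  have hft := hpos _ (inv_pos.2 ht)
  have hfu := hpos _ (inv_pos.2 hu)
  have hftu := hpos _ (inv_pos.2 htu)
  calc u ^ (-η) * f u⁻¹ ^ (-γ) * (t - u) ^ (-θ) * f (t - u)⁻¹ ^ (-β)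
      ≤ u ^ (-η) * ((u / t) ^ (α * γ) * f t⁻¹ ^ (-γ)) * (t - u) ^ (-θ)
          * (((t - u) / t) ^ (α * β) * f t⁻¹ ^ (-β)) := by
        gcongr
        · exact hf.rpow_neg_inv_le hpos hγ hu hut.le
        · exact hf.rpow_neg_inv_le hpos hβ htu (sub_le_self t hu.le)
    _ = _ := by
        rw [div_rpow hu.le ht.le, div_rpow htu.le ht.le, rpow_sub hu, rpow_sub htu,
          rpow_neg ht.le, mul_add, rpow_add ht, sub_eq_add_neg (-γ), rpow_add hft, rpow_neg hu.le,
          rpow_neg htu.le]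
        field_simp

/-- Let `β, γ ≥ 0` and `η, θ ∈ ℝ` with `β/2 + 1 − θ > 0` and
`γ/2 + 1 − η > 0`. If `Φ⁻¹` satisfies `Φ⁻¹(λr) ≥ λ^{1/2}Φ⁻¹(r)` for `λ ≥ 1, r > 0`,
then for every `t > 0`:
`∫₀ᵗ u^{-η} Φ⁻¹(u⁻¹)^{-γ} (t−u)^{-θ} Φ⁻¹((t−u)⁻¹)^{-β} du
  ≤ B(β/2+1−θ, γ/2+1−η) · t^{1−η−θ} Φ⁻¹(t⁻¹)^{-γ−β}`,
where `B(a,b) = ∫₀¹ s^{a−1}(1−s)^{b−1} ds` is the Beta function. -/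
theorem stmt_10 (Φinv : ℝ → ℝ)
    (hinvpos : ∀ r : ℝ, 0 < r → 0 < Φinv r)
    (hscale : ∀ lam r : ℝ, 1 ≤ lam → 0 < r →
      lam ^ ((1 : ℝ) / 2) * Φinv r ≤ Φinv (lam * r))
    (β γ η θ : ℝ) (hβ : 0 ≤ β) (hγ : 0 ≤ γ)
    (hθ : 0 < β / 2 + 1 - θ) (hη : 0 < γ / 2 + 1 - η) :
    ∀ t : ℝ, 0 < t →
      (∫ u in Ioo (0 : ℝ) t,
          u ^ (-η) * Φinv u⁻¹ ^ (-γ) * (t - u) ^ (-θ) * Φinv (t - u)⁻¹ ^ (-β)) ≤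
        (∫ s in Ioo (0 : ℝ) 1,
            s ^ (β / 2 + 1 - θ - 1) * (1 - s) ^ (γ / 2 + 1 - η - 1)) *
          t ^ (1 - η - θ) * Φinv t⁻¹ ^ (-γ - β) := by
  intro t ht
  rw [show β / 2 + 1 - θ - 1 = 1 / 2 * β - θ by ring,
    show γ / 2 + 1 - η - 1 = 1 / 2 * γ - η by ring]
  set C := t ^ (-(1 / 2 * (γ + β))) * Φinv t⁻¹ ^ (-γ - β) with hC
  have hdom : IntegrableOn (fun u => u ^ (1 / 2 * γ - η) * (t - u) ^ (1 / 2 * β - θ) * C)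
      (Ioo 0 t) := by
    have := intervalIntegrable_rpow_mul_sub_rpow (p := 1 / 2 * γ - η) (q := 1 / 2 * β - θ)
      (by linarith) (by linarith) ht
    exact (this.1.mono_set Ioo_subset_Ioc_self).mul_const C
  have hpow : t ^ (1 / 2 * γ - η + (1 / 2 * β - θ) + 1) * t ^ (-(1 / 2 * (γ + β)))
      = t ^ (1 - η - θ) := by
    rw [← rpow_add ht]
    ring_nf
  calc _ ≤ ∫ u in Ioo 0 t, u ^ (1 / 2 * γ - η) * (t - u) ^ (1 / 2 * β - θ) * C := by
        refine setIntegral_mono_of_nonneg (fun u ⟨hu, hut⟩ => ?_)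
          (fun u hu => LowerScaling.convolution_integrand_le hscale hinvpos hβ hγ hu.1 hu.2) hdom
        have htu := sub_pos.2 hut
        have := hinvpos _ (inv_pos.2 hu)
        have := hinvpos _ (inv_pos.2 htu)
        positivity
    _ = t ^ (1 / 2 * γ - η + (1 / 2 * β - θ) + 1)
          * (∫ s in Ioo 0 1, s ^ (1 / 2 * β - θ) * (1 - s) ^ (1 / 2 * γ - η)) * C := by
        rw [integral_mul_const, integral_rpow_mul_sub_rpow _ _ ht]
    _ = _ := by
        rw [hC, ← hpow]
        ring
end

section
/- Suppose Φ satisfies the weak lower scaling condition a₁λ^{δ₁}Φ(r) ≤ Φ(λr) for λ ≥ 1, r ≥ 1 (a₁ ∈ (0,1), δ₁ ∈ (0,2]). Then for every T ≥ 1, t ∈ (0,T] and β < δ₁: ∫_{Φ⁻¹(T⁻¹)/Φ⁻¹(t⁻¹)}^{1} r^{β−1} Φ(r⁻¹) dr ≤ (Φ⁻¹(T⁻¹)^{β−2} / (a₁(δ₁ − β))) · t⁻¹ Φ⁻¹(t⁻¹)^{-β}. -/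
open Real MeasureTheory Set

/-! Put `A = Φ⁻¹(T⁻¹) ≤ 1` and `B = Φ⁻¹(t⁻¹)`, so that `Φ(B) = t⁻¹`. On `A/B < r ≤ 1` the two
scaling conditions combine into the single bound `Φ(r⁻¹) ≤ a₁⁻¹ A^(δ₁-2) (Br)^(-δ₁) Φ(B)`:
lower scaling gives it directly when `Br ≥ 1`, and when `Br < 1` upper scaling gives it up to
the factor `(Br)^(δ₁-2)`, which is at most `A^(δ₁-2)` because `Br > A`. Since `β < δ₁`, the
integral of `r^(β-δ₁-1)` over `(A/B, 1]` is at most `(A/B)^(β-δ₁)/(δ₁-β)`, and the powers of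
`A` and `B` collect into the right-hand side. -/

lemma apply_inv_le_of_upper_scaling {Φ : ℝ → ℝ}
    (hup : ∀ lam r : ℝ, 1 ≤ lam → 0 < r → Φ (lam * r) ≤ lam ^ 2 * Φ r)
    {x r : ℝ} (hx : 0 < x) (hr : 0 < r) (hxr : x * r ≤ 1) :
    Φ r⁻¹ ≤ (x * r) ^ (-2 : ℝ) * Φ x := by
  have h := hup (x * r)⁻¹ x ((one_le_inv₀ (by positivity)).2 hxr) hx
  rw [show (x * r)⁻¹ * x = r⁻¹ by field_simp] at h
  rwa [rpow_neg (by positivity), rpow_two, ← inv_pow]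

lemma apply_inv_le_of_lower_scaling {Φ : ℝ → ℝ} {a₁ δ₁ : ℝ} (ha₁ : 0 < a₁)
    (hlow : ∀ lam r : ℝ, 1 ≤ lam → 1 ≤ r → a₁ * lam ^ δ₁ * Φ r ≤ Φ (lam * r))
    {x r : ℝ} (hr : 0 < r) (hr₁ : r ≤ 1) (hxr : 1 ≤ x * r) :
    Φ r⁻¹ ≤ a₁⁻¹ * (x * r) ^ (-δ₁) * Φ x := by
  have h := hlow (x * r) r⁻¹ hxr ((one_le_inv₀ hr).2 hr₁)
  rw [show x * r * r⁻¹ = x by field_simp] at h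
  have hpos : 0 < a₁ * (x * r) ^ δ₁ := by positivity
  calc Φ r⁻¹ ≤ Φ x / (a₁ * (x * r) ^ δ₁) := (le_div_iff₀' hpos).2 h
    _ = a₁⁻¹ * (x * r) ^ (-δ₁) * Φ x := by
      rw [rpow_neg (by positivity)]; field_simp

lemma apply_inv_le_of_scaling {Φ : ℝ → ℝ} {a₁ δ₁ : ℝ}
    (ha₁ : 0 < a₁) (ha₂ : a₁ ≤ 1) (hδ₂ : δ₁ ≤ 2)
    (hup : ∀ lam r : ℝ, 1 ≤ lam → 0 < r → Φ (lam * r) ≤ lam ^ 2 * Φ r)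
    (hlow : ∀ lam r : ℝ, 1 ≤ lam → 1 ≤ r → a₁ * lam ^ δ₁ * Φ r ≤ Φ (lam * r))
    {A x r : ℝ} (hA : 0 < A) (hA₁ : A ≤ 1) (hx : 0 < x) (hΦx : 0 ≤ Φ x)
    (hr : 0 < r) (hr₁ : r ≤ 1) (hAxr : A ≤ x * r) :
    Φ r⁻¹ ≤ a₁⁻¹ * A ^ (δ₁ - 2) * (x * r) ^ (-δ₁) * Φ x := by
  have hA' : 1 ≤ A ^ (δ₁ - 2) := one_le_rpow_of_pos_of_le_one_of_nonpos hA hA₁ (by linarith)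
  have ha₁' : 1 ≤ a₁⁻¹ := (one_le_inv₀ ha₁).2 ha₂
  have hxr : 0 < x * r := by positivity
  rcases le_or_gt 1 (x * r) with h1 | h1
  · calc Φ r⁻¹ ≤ a₁⁻¹ * (x * r) ^ (-δ₁) * Φ x :=
          apply_inv_le_of_lower_scaling ha₁ hlow hr hr₁ h1
      _ ≤ A ^ (δ₁ - 2) * (a₁⁻¹ * (x * r) ^ (-δ₁) * Φ x) :=
        le_mul_of_one_le_left (by positivity) hA'
      _ = _ := by ring
  · have hsplit : (x * r) ^ (-2 : ℝ) = (x * r) ^ (δ₁ - 2) * (x * r) ^ (-δ₁) := by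
      rw [← rpow_add hxr]; ring_nf
    calc Φ r⁻¹ ≤ (x * r) ^ (-2 : ℝ) * Φ x := apply_inv_le_of_upper_scaling hup hx hr h1.le
      _ = (x * r) ^ (δ₁ - 2) * ((x * r) ^ (-δ₁) * Φ x) := by rw [hsplit, mul_assoc]
      _ ≤ A ^ (δ₁ - 2) * ((x * r) ^ (-δ₁) * Φ x) :=
        mul_le_mul_of_nonneg_right (rpow_le_rpow_of_nonpos hA hAxr (by linarith)) (by positivity)
      _ ≤ a₁⁻¹ * (A ^ (δ₁ - 2) * ((x * r) ^ (-δ₁) * Φ x)) :=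
        le_mul_of_one_le_left (by positivity) ha₁'
      _ = _ := by ring

lemma setIntegral_Ioc_one_rpow_le {a γ : ℝ} (ha : 0 < a) (hγ : γ < 0) :
    ∫ r in Ioc a 1, r ^ (γ - 1) ≤ a ^ γ / -γ := by
  rcases le_or_gt a 1 with ha_le | ha_gt
  · rw [← intervalIntegral.integral_of_le ha_le,
      integral_rpow (Or.inr ⟨by linarith, notMem_uIcc_of_lt ha one_pos⟩),
      sub_add_cancel, one_rpow, ← neg_div_neg_eq, neg_sub]
    exact div_le_div_of_nonneg_right (by linarith) (by linarith)
  · rw [Ioc_eq_empty (not_lt.2 ha_gt.le), Measure.restrict_empty, integral_zero_measure]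
    exact div_nonneg (rpow_pos_of_pos ha _).le (by linarith)

lemma setIntegral_Ioc_one_rpow_mul_le {f : ℝ → ℝ} {a β δ C : ℝ} (ha : 0 < a) (hβ : β < δ)
    (hC : 0 ≤ C) (hf₀ : ∀ r ∈ Ioc a 1, 0 ≤ f r) (hf : ∀ r ∈ Ioc a 1, f r ≤ C * r ^ (-δ)) :
    ∫ r in Ioc a 1, r ^ (β - 1) * f r ≤ C * (a ^ (β - δ) / (δ - β)) := by
  have hpointwise : ∀ r ∈ Ioc a 1, r ^ (β - 1) * f r ≤ C * r ^ (β - δ - 1) := fun r hr => by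
    have hr₀ : 0 < r := ha.trans hr.1
    calc r ^ (β - 1) * f r ≤ r ^ (β - 1) * (C * r ^ (-δ)) := by gcongr; exact hf r hr
      _ = C * r ^ (β - δ - 1) := by
        rw [show β - δ - 1 = β - 1 + -δ by ring, rpow_add hr₀]; ring
  calc ∫ r in Ioc a 1, r ^ (β - 1) * f r
      ≤ ∫ r in Ioc a 1, C * r ^ (β - δ - 1) := by
        refine integral_mono_of_nonneg ?_ (.const_mul
          (intervalIntegral.intervalIntegrable_rpow (Or.inr (notMem_uIcc_of_lt ha one_pos))).1 C)
          ((ae_restrict_mem measurableSet_Ioc).mono hpointwise)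
        refine (ae_restrict_mem measurableSet_Ioc).mono fun r hr => ?_
        exact mul_nonneg (rpow_nonneg (ha.trans hr.1).le _) (hf₀ r hr)
    _ = C * ∫ r in Ioc a 1, r ^ (β - δ - 1) := integral_const_mul C _
    _ ≤ C * (a ^ (β - δ) / (δ - β)) := by
        gcongr
        simpa using setIntegral_Ioc_one_rpow_le ha (sub_neg.2 hβ)

theorem stmt_11_general (Φ Φinv : ℝ → ℝ) (a₁ δ₁ : ℝ)
    (hδ₂ : δ₁ ≤ 2) (ha₁ : 0 < a₁) (ha₂ : a₁ < 1)
    (hΦpos : ∀ t : ℝ, 0 < t → 0 < Φ t)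
    (hΦmono : ∀ s t : ℝ, 0 < s → s < t → Φ s < Φ t)
    (hΦ1 : Φ 1 = 1)
    (hinvpos : ∀ r : ℝ, 0 < r → 0 < Φinv r)
    (hright : ∀ r : ℝ, 0 < r → Φ (Φinv r) = r)
    (hup : ∀ lam r : ℝ, 1 ≤ lam → 0 < r → Φ (lam * r) ≤ lam ^ 2 * Φ r)
    (hlow : ∀ lam r : ℝ, 1 ≤ lam → 1 ≤ r → a₁ * lam ^ δ₁ * Φ r ≤ Φ (lam * r)) :
    ∀ T : ℝ, 1 ≤ T → ∀ t : ℝ, 0 < t → t ≤ T → ∀ β : ℝ, β < δ₁ →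
      (∫ r in Ioc (Φinv T⁻¹ / Φinv t⁻¹) 1, r ^ (β - 1) * Φ r⁻¹) ≤
        Φinv T⁻¹ ^ (β - 2) / (a₁ * (δ₁ - β)) * (t⁻¹ * Φinv t⁻¹ ^ (-β)) := by
  intro T hT t ht _ β hβ
  set A := Φinv T⁻¹
  set B := Φinv t⁻¹
  have hA : 0 < A := hinvpos _ (by positivity)
  have hB : 0 < B := hinvpos _ (by positivity)
  have hΦB : Φ B = t⁻¹ := hright _ (by positivity)
  have hA₁ : A ≤ 1 := by
    refine not_lt.1 fun h => ?_
    have := hΦmono 1 A one_pos h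
    rw [hΦ1, hright _ (by positivity)] at this
    exact (inv_le_one_of_one_le₀ hT).not_gt this
  have hΦ_le : ∀ r ∈ Ioc (A / B) 1,
      Φ r⁻¹ ≤ a₁⁻¹ * A ^ (δ₁ - 2) * B ^ (-δ₁) * t⁻¹ * r ^ (-δ₁) := by
    rintro r ⟨hr, hr₁⟩
    have hr₀ : 0 < r := (div_pos hA hB).trans hr
    have := apply_inv_le_of_scaling ha₁ ha₂.le hδ₂ hup hlow hA hA₁ hB (hΦB ▸ by positivity)
      hr₀ hr₁ ((div_le_iff₀' hB).1 hr.le)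
    rw [mul_rpow hB.le hr₀.le, hΦB] at this
    exact this.trans_eq (by ring)
  calc (∫ r in Ioc (A / B) 1, r ^ (β - 1) * Φ r⁻¹)
      ≤ a₁⁻¹ * A ^ (δ₁ - 2) * B ^ (-δ₁) * t⁻¹ * ((A / B) ^ (β - δ₁) / (δ₁ - β)) :=
        setIntegral_Ioc_one_rpow_mul_le (div_pos hA hB) hβ (by positivity)
          (fun r hr => (hΦpos _ (inv_pos.2 ((div_pos hA hB).trans hr.1))).le) hΦ_le
    _ = A ^ (β - 2) / (a₁ * (δ₁ - β)) * (t⁻¹ * B ^ (-β)) := by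
        rw [div_rpow hA.le hB.le, show β - 2 = δ₁ - 2 + (β - δ₁) by ring, rpow_add hA,
          show -δ₁ = -β + (β - δ₁) by ring, rpow_add hB]
        have : B ^ (β - δ₁) ≠ 0 := (rpow_pos_of_pos hB _).ne'
        have : δ₁ - β ≠ 0 := (sub_pos.2 hβ).ne'
        field_simp

/-- If `Φ` satisfies the weak lower scaling condition
`a₁ λ^{δ₁} Φ(r) ≤ Φ(λr)` for `λ ≥ 1, r ≥ 1` (`a₁ ∈ (0,1)`, `δ₁ ∈ (0,2]`), then for
every `T ≥ 1`, `t ∈ (0,T]` and `β < δ₁`: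
`∫_{Φ⁻¹(T⁻¹)/Φ⁻¹(t⁻¹)}^1 r^{β−1} Φ(r⁻¹) dr
   ≤ (Φ⁻¹(T⁻¹)^{β−2} / (a₁(δ₁−β))) t⁻¹ Φ⁻¹(t⁻¹)^{-β}`. -/
theorem stmt_11 (Φ Φinv : ℝ → ℝ) (a₁ δ₁ : ℝ)
    (hδ₁ : 0 < δ₁) (hδ₂ : δ₁ ≤ 2) (ha₁ : 0 < a₁) (ha₂ : a₁ < 1)
    (hΦpos : ∀ t : ℝ, 0 < t → 0 < Φ t)
    (hΦmono : ∀ s t : ℝ, 0 < s → s < t → Φ s < Φ t)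
    (hΦ1 : Φ 1 = 1)
    (hinvpos : ∀ r : ℝ, 0 < r → 0 < Φinv r)
    (hleft : ∀ t : ℝ, 0 < t → Φinv (Φ t) = t)
    (hright : ∀ r : ℝ, 0 < r → Φ (Φinv r) = r)
    (hup : ∀ lam r : ℝ, 1 ≤ lam → 0 < r → Φ (lam * r) ≤ lam ^ 2 * Φ r)
    (hlow : ∀ lam r : ℝ, 1 ≤ lam → 1 ≤ r → a₁ * lam ^ δ₁ * Φ r ≤ Φ (lam * r)) :
    ∀ T : ℝ, 1 ≤ T → ∀ t : ℝ, 0 < t → t ≤ T → ∀ β : ℝ, β < δ₁ →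
      (∫ r in Ioc (Φinv T⁻¹ / Φinv t⁻¹) 1, r ^ (β - 1) * Φ r⁻¹) ≤
        Φinv T⁻¹ ^ (β - 2) / (a₁ * (δ₁ - β)) * (t⁻¹ * Φinv t⁻¹ ^ (-β)) :=
  stmt_11_general Φ Φinv a₁ δ₁ hδ₂ ha₁ ha₂ hΦpos hΦmono hΦ1 hinvpos hright hup hlow
end

section
/- Assume Φ satisfies weak lower scaling (constants a₁, δ₁) and the integrability condition ∫₀¹ Φ(r)/r dr = C_* < ∞. For every T ≥ 1 there exists c₁ > 0 (depending on d, δ₁, a₁, C_*, T, Φ⁻¹(T⁻¹)) such that for all 0 < t ≤ T, β ∈ [0, δ₁) and γ ∈ ℝ: ∫_{ℝ^d} ρ_γ^β(t,x) dx ≤ (c₁/(δ₁ − β)) · t⁻¹ Φ⁻¹(t⁻¹)^{-γ−β}. -/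
open Real MeasureTheory Set

/-- `ρ_γ^β(t,x) = Φ⁻¹(t⁻¹)^{-γ} (|x|^β ∧ 1) ρ(t,x)` where
`ρ(t,x) = Φ((1/Φ⁻¹(t⁻¹)+|x|)⁻¹)(1/Φ⁻¹(t⁻¹)+|x|)^{-d}`. -/
noncomputable def rhogb (d : ℕ) (Φ Φinv : ℝ → ℝ) (γ β t : ℝ)
    (x : EuclideanSpace ℝ (Fin d)) : ℝ :=
  Φinv t⁻¹ ^ (-γ) * min (‖x‖ ^ β) 1 *
    (Φ (((Φinv t⁻¹)⁻¹ + ‖x‖)⁻¹) / ((Φinv t⁻¹)⁻¹ + ‖x‖) ^ d)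

open scoped ENNReal

/-!
Write `A = Φ⁻¹(t⁻¹)`, so that `Φ A = t⁻¹`. In polar coordinates the integral is `A^{-γ}` times a
radial integral; bounding `y^{d-1}/(A⁻¹+y)^d` by `1/(A⁻¹+y)` and substituting `u = A⁻¹ + y`, the
latter is at most `∫_{A⁻¹}^∞ min(u^β, 1) Φ(u⁻¹) du/u`. On `(A⁻¹, 1]` weak lower scaling applied
to `A = (Au) · u⁻¹` gives `Φ(u⁻¹) ≤ a₁⁻¹ Φ(A) (Au)^{-δ₁}`, so this piece is at most
`a₁⁻¹ t⁻¹ A^{-β}/(δ₁ - β)`; on `(1, ∞)` the substitution `r = u⁻¹` turns it into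
`∫₀¹ Φ(r) dr/r = C_*`. Finally `t⁻¹ A^{-β} ≥ min(a₁, T⁻¹)` for `t ≤ T`, which absorbs `C_*` into
the first term.
-/

-- No integrability is assumed: a non-integrable `f` has Bochner integral `0`.
lemma setIntegral_le_of_setLIntegral_ofReal_le {α : Type*} [MeasurableSpace α] {μ : Measure α}
    {s : Set α} {f : α → ℝ} {M : ℝ} (hs : MeasurableSet s) (hf : ∀ x ∈ s, 0 ≤ f x)
    (hM : 0 ≤ M) (h : ∫⁻ x in s, ENNReal.ofReal (f x) ∂μ ≤ ENNReal.ofReal M) :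
    ∫ x in s, f x ∂μ ≤ M := by
  have hnorm : ∫⁻ x in s, ENNReal.ofReal ‖f x‖ ∂μ = ∫⁻ x in s, ENNReal.ofReal (f x) ∂μ :=
    setLIntegral_congr_fun hs fun x hx => by rw [Real.norm_of_nonneg (hf x hx)]
  calc ∫ x in s, f x ∂μ ≤ ‖∫ x in s, f x ∂μ‖ := le_abs_self _
    _ ≤ (∫⁻ x in s, ENNReal.ofReal ‖f x‖ ∂μ).toReal := norm_integral_le_lintegral_norm f
    _ ≤ M := ENNReal.toReal_le_of_le_ofReal hM (hnorm ▸ h)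

lemma integral_comp_norm_euclideanSpace {d : ℕ} (hd : 1 ≤ d) (F : ℝ → ℝ) :
    ∫ x : EuclideanSpace ℝ (Fin d), F ‖x‖ =
      d * volume.real (Metric.ball (0 : EuclideanSpace ℝ (Fin d)) 1) *
        ∫ y in Ioi (0 : ℝ), y ^ (d - 1) * F y := by
  have : Nontrivial (EuclideanSpace ℝ (Fin d)) :=
    Module.nontrivial_of_finrank_pos (R := ℝ) (by rw [finrank_euclideanSpace_fin]; omega)
  simpa [finrank_euclideanSpace_fin, nsmul_eq_mul, mul_assoc] using
    integral_fun_norm_addHaar (volume : Measure (EuclideanSpace ℝ (Fin d))) F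

lemma lintegral_Ioi_add_left (s : ℝ) (g : ℝ → ℝ≥0∞) :
    ∫⁻ y in Ioi (0 : ℝ), g (s + y) = ∫⁻ u in Ioi s, g u := by
  rw [(measurePreserving_add_left volume s).setLIntegral_comp_emb
    (measurableEmbedding_addLeft s) g, image_const_add_Ioi, add_zero]

lemma lintegral_Ioi_one_comp_inv_div (f : ℝ → ℝ) :
    ∫⁻ u in Ioi (1 : ℝ), ENNReal.ofReal (f u⁻¹ / u) =
      ∫⁻ r in Ioo (0 : ℝ) 1, ENNReal.ofReal (f r / r) := by
  have himage : (fun r : ℝ => r⁻¹) '' Ioo 0 1 = Ioi 1 := by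
    rw [image_inv_eq_inv, inv_Ioo_0_left one_pos, inv_one]
  rw [← himage, lintegral_image_eq_lintegral_abs_deriv_mul measurableSet_Ioo
    (fun r hr => (hasDerivAt_inv hr.1.ne').hasDerivWithinAt) (fun a _ b _ h => inv_injective h)]
  refine setLIntegral_congr_fun measurableSet_Ioo fun r hr => ?_
  have hr0 : 0 < r := hr.1
  rw [← ENNReal.ofReal_mul (abs_nonneg _), abs_neg, abs_inv, abs_pow, abs_of_pos hr0, inv_inv]
  congr 1
  field_simp

lemma pow_mul_min_rpow_mul_div_pow_le {d : ℕ} (hd : 1 ≤ d) {s y β c : ℝ} (hs : 0 ≤ s)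
    (hy : 0 ≤ y) (hβ : 0 ≤ β) (hc : 0 ≤ c) (hsy : 0 < s + y) :
    y ^ (d - 1) * (min (y ^ β) 1 * (c / (s + y) ^ d)) ≤ min ((s + y) ^ β) 1 * (c / (s + y)) := by
  have hy_le : y ≤ s + y := le_add_of_nonneg_left hs
  have hpow : (s + y) ^ d = (s + y) ^ (d - 1) * (s + y) := by
    rw [← pow_succ, Nat.sub_add_cancel hd]
  calc y ^ (d - 1) * (min (y ^ β) 1 * (c / (s + y) ^ d))
      ≤ (s + y) ^ (d - 1) * (min ((s + y) ^ β) 1 * (c / (s + y) ^ d)) := by gcongr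
    _ = min ((s + y) ^ β) 1 * (c / (s + y)) := by
        rw [hpow]
        field_simp

section LowerScaling

variable {d : ℕ} {Φ : ℝ → ℝ} {a₁ δ₁ : ℝ}

lemma comp_inv_le_of_lowerScaling
    (hlow : ∀ lam r : ℝ, 1 ≤ lam → 1 ≤ r → a₁ * lam ^ δ₁ * Φ r ≤ Φ (lam * r))
    (ha₁ : 0 < a₁) {A u : ℝ} (hA : 0 < A) (hAu : A⁻¹ ≤ u) (hu : u ≤ 1) :
    Φ u⁻¹ ≤ a₁⁻¹ * Φ A * A ^ (-δ₁) * u ^ (-δ₁) := by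
  have hu0 : 0 < u := (inv_pos.2 hA).trans_le hAu
  have h := hlow (A * u) u⁻¹ (by rwa [← inv_mul_le_iff₀ hA, mul_one])
    ((one_le_inv₀ hu0).2 hu)
  rw [mul_inv_cancel_right₀ hu0.ne', mul_rpow hA.le hu0.le] at h
  rw [rpow_neg hA.le, rpow_neg hu0.le]
  have : 0 < a₁ * (A ^ δ₁ * u ^ δ₁) := by positivity
  rw [← le_div_iff₀' this] at h
  refine h.trans_eq ?_
  field_simp

lemma lintegral_Ioc_rpow_mul_comp_inv_div_le
    (hlow : ∀ lam r : ℝ, 1 ≤ lam → 1 ≤ r → a₁ * lam ^ δ₁ * Φ r ≤ Φ (lam * r))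
    (ha₁ : 0 < a₁) {A β : ℝ} (hA : 0 < A) (hΦA : 0 ≤ Φ A) (hβδ : β < δ₁) :
    ∫⁻ u in Ioc A⁻¹ 1, ENNReal.ofReal (u ^ β * (Φ u⁻¹ / u)) ≤
      ENNReal.ofReal (a₁⁻¹ * Φ A * A ^ (-β) / (δ₁ - β)) := by
  set c := a₁⁻¹ * Φ A * A ^ (-δ₁)
  have hc : 0 ≤ c := by positivity
  have hexp : β - δ₁ - 1 < -1 := by linarith
  have hbound : ∀ u ∈ Ioc A⁻¹ 1,
      ENNReal.ofReal (u ^ β * (Φ u⁻¹ / u)) ≤ ENNReal.ofReal (c * u ^ (β - δ₁ - 1)) := by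
    intro u ⟨hAu, hu⟩
    have hu0 : 0 < u := (inv_pos.2 hA).trans hAu
    refine ENNReal.ofReal_le_ofReal ?_
    calc u ^ β * (Φ u⁻¹ / u) ≤ u ^ β * (c * u ^ (-δ₁) / u) := by
          gcongr
          exact comp_inv_le_of_lowerScaling hlow ha₁ hA hAu.le hu
      _ = c * u ^ (β - δ₁ - 1) := by
          rw [sub_sub, sub_eq_add_neg, rpow_add hu0, rpow_neg hu0.le (δ₁ + 1),
            rpow_add_one hu0.ne', rpow_neg hu0.le]
          field_simp
  have hintegral : ∫ u in Ioi A⁻¹, c * u ^ (β - δ₁ - 1) =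
      a₁⁻¹ * Φ A * A ^ (-β) / (δ₁ - β) := by
    rw [integral_const_mul, integral_Ioi_rpow_of_lt hexp (inv_pos.2 hA),
      show β - δ₁ - 1 + 1 = -(δ₁ - β) by ring, inv_rpow hA.le, ← rpow_neg hA.le, neg_neg]
    have : A ^ (-δ₁) * A ^ (δ₁ - β) = A ^ (-β) := by rw [← rpow_add hA]; ring_nf
    rw [← this, div_neg, neg_div, neg_neg]
    ring
  calc ∫⁻ u in Ioc A⁻¹ 1, ENNReal.ofReal (u ^ β * (Φ u⁻¹ / u))
      ≤ ∫⁻ u in Ioc A⁻¹ 1, ENNReal.ofReal (c * u ^ (β - δ₁ - 1)) :=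
        setLIntegral_mono' measurableSet_Ioc hbound
    _ ≤ ∫⁻ u in Ioi A⁻¹, ENNReal.ofReal (c * u ^ (β - δ₁ - 1)) :=
        lintegral_mono_set Ioc_subset_Ioi_self
    _ = ENNReal.ofReal (a₁⁻¹ * Φ A * A ^ (-β) / (δ₁ - β)) := by
        rw [← hintegral, ofReal_integral_eq_lintegral_ofReal
          ((integrableOn_Ioi_rpow_of_lt hexp (inv_pos.2 hA)).const_mul c)]
        exact (ae_restrict_iff' measurableSet_Ioi).2 (.of_forall fun u hu =>
          mul_nonneg hc (rpow_nonneg ((inv_pos.2 hA).trans hu).le _))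

lemma lintegral_Ioi_min_rpow_mul_comp_inv_div_le
    (hΦnn : ∀ r : ℝ, 0 < r → 0 ≤ Φ r)
    (hlow : ∀ lam r : ℝ, 1 ≤ lam → 1 ≤ r → a₁ * lam ^ δ₁ * Φ r ≤ Φ (lam * r))
    (hC : IntegrableOn (fun r : ℝ => Φ r / r) (Ioo 0 1))
    (ha₁ : 0 < a₁) {A β : ℝ} (hA : 0 < A) (hβδ : β < δ₁) :
    ∫⁻ u in Ioi A⁻¹, ENNReal.ofReal (min (u ^ β) 1 * (Φ u⁻¹ / u)) ≤
      ENNReal.ofReal (a₁⁻¹ * Φ A * A ^ (-β) / (δ₁ - β)) +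
        ENNReal.ofReal (∫ r in Ioo 0 1, Φ r / r) := by
  have hsplit : Ioi A⁻¹ ⊆ Ioc A⁻¹ 1 ∪ Ioi 1 := fun u hu =>
    (le_or_gt u 1).imp (fun h => ⟨hu, h⟩) id
  have hnear : ∫⁻ u in Ioc A⁻¹ 1, ENNReal.ofReal (min (u ^ β) 1 * (Φ u⁻¹ / u)) ≤
      ∫⁻ u in Ioc A⁻¹ 1, ENNReal.ofReal (u ^ β * (Φ u⁻¹ / u)) :=
    setLIntegral_mono' measurableSet_Ioc fun u hu => by
      have hu0 : 0 < u := (inv_pos.2 hA).trans hu.1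
      exact ENNReal.ofReal_le_ofReal (mul_le_mul_of_nonneg_right (min_le_left _ _)
        (div_nonneg (hΦnn _ (inv_pos.2 hu0)) hu0.le))
  have hfar : ∫⁻ u in Ioi 1, ENNReal.ofReal (min (u ^ β) 1 * (Φ u⁻¹ / u)) ≤
      ∫⁻ u in Ioi 1, ENNReal.ofReal (Φ u⁻¹ / u) :=
    setLIntegral_mono' measurableSet_Ioi fun u hu => by
      have hu0 : (0 : ℝ) < u := zero_lt_one.trans hu
      exact ENNReal.ofReal_le_ofReal (mul_le_of_le_one_left
        (div_nonneg (hΦnn _ (inv_pos.2 hu0)) hu0.le) (min_le_right _ _))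
  have htail : ∫⁻ u in Ioi 1, ENNReal.ofReal (Φ u⁻¹ / u) =
      ENNReal.ofReal (∫ r in Ioo 0 1, Φ r / r) := by
    rw [lintegral_Ioi_one_comp_inv_div, ofReal_integral_eq_lintegral_ofReal hC]
    exact (ae_restrict_iff' measurableSet_Ioo).2 (.of_forall fun r hr =>
      div_nonneg (hΦnn r hr.1) hr.1.le)
  calc ∫⁻ u in Ioi A⁻¹, ENNReal.ofReal (min (u ^ β) 1 * (Φ u⁻¹ / u))
      ≤ ∫⁻ u in Ioc A⁻¹ 1 ∪ Ioi 1, ENNReal.ofReal (min (u ^ β) 1 * (Φ u⁻¹ / u)) :=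
        lintegral_mono_set hsplit
    _ ≤ _ := lintegral_union_le _ _ _
    _ ≤ _ := add_le_add (hnear.trans (lintegral_Ioc_rpow_mul_comp_inv_div_le hlow ha₁ hA
          (hΦnn A hA) hβδ)) (hfar.trans htail.le)

lemma setIntegral_radial_le (hd : 1 ≤ d)
    (hΦnn : ∀ r : ℝ, 0 < r → 0 ≤ Φ r)
    (hlow : ∀ lam r : ℝ, 1 ≤ lam → 1 ≤ r → a₁ * lam ^ δ₁ * Φ r ≤ Φ (lam * r))
    (hC : IntegrableOn (fun r : ℝ => Φ r / r) (Ioo 0 1))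
    (ha₁ : 0 < a₁) {A β : ℝ} (hA : 0 < A) (hβ : 0 ≤ β) (hβδ : β < δ₁) :
    ∫ y in Ioi (0 : ℝ), y ^ (d - 1) * (min (y ^ β) 1 * (Φ (A⁻¹ + y)⁻¹ / (A⁻¹ + y) ^ d)) ≤
      a₁⁻¹ * Φ A * A ^ (-β) / (δ₁ - β) + ∫ r in Ioo 0 1, Φ r / r := by
  have hA' : 0 < A⁻¹ := inv_pos.2 hA
  have hM : 0 ≤ a₁⁻¹ * Φ A * A ^ (-β) / (δ₁ - β) := by
    have := hΦnn A hA
    have := sub_pos.2 hβδ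
    positivity
  have hC0 : 0 ≤ ∫ r in Ioo 0 1, Φ r / r :=
    setIntegral_nonneg measurableSet_Ioo fun r hr => div_nonneg (hΦnn r hr.1) hr.1.le
  refine setIntegral_le_of_setLIntegral_ofReal_le measurableSet_Ioi (fun y hy => ?_)
    (add_nonneg hM hC0) ?_
  · have hy : (0 : ℝ) < y := hy
    have := hΦnn _ (inv_pos.2 (add_pos hA' hy))
    positivity
  calc ∫⁻ y in Ioi 0, ENNReal.ofReal
        (y ^ (d - 1) * (min (y ^ β) 1 * (Φ (A⁻¹ + y)⁻¹ / (A⁻¹ + y) ^ d)))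
      ≤ ∫⁻ y in Ioi 0, ENNReal.ofReal
        (min ((A⁻¹ + y) ^ β) 1 * (Φ (A⁻¹ + y)⁻¹ / (A⁻¹ + y))) :=
        setLIntegral_mono' measurableSet_Ioi fun y (hy : 0 < y) =>
          ENNReal.ofReal_le_ofReal <| pow_mul_min_rpow_mul_div_pow_le hd hA'.le hy.le hβ
            (hΦnn _ (inv_pos.2 (add_pos hA' hy))) (add_pos hA' hy)
    _ = ∫⁻ u in Ioi A⁻¹, ENNReal.ofReal (min (u ^ β) 1 * (Φ u⁻¹ / u)) :=
        lintegral_Ioi_add_left A⁻¹ fun u => ENNReal.ofReal (min (u ^ β) 1 * (Φ u⁻¹ / u))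
    _ ≤ _ := lintegral_Ioi_min_rpow_mul_comp_inv_div_le hΦnn hlow hC ha₁ hA hβδ
    _ = _ := (ENNReal.ofReal_add hM hC0).symm

lemma min_le_mul_rpow_neg_of_lowerScaling
    (hlow : ∀ lam r : ℝ, 1 ≤ lam → 1 ≤ r → a₁ * lam ^ δ₁ * Φ r ≤ Φ (lam * r))
    (hΦ1 : Φ 1 = 1) (ha₁ : 0 ≤ a₁) {A β T : ℝ} (hA : 0 < A) (hβ : 0 ≤ β) (hβδ : β ≤ δ₁)
    (hT : 0 < T) (hΦA : T⁻¹ ≤ Φ A) :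
    min a₁ T⁻¹ ≤ Φ A * A ^ (-β) := by
  rcases le_or_gt 1 A with h1A | hA1
  · have hscale : a₁ * A ^ δ₁ ≤ Φ A := by simpa [hΦ1] using hlow A 1 h1A le_rfl
    calc min a₁ T⁻¹ ≤ a₁ * A ^ (δ₁ - β) :=
          (min_le_left _ _).trans (le_mul_of_one_le_right ha₁ (one_le_rpow h1A (by linarith)))
      _ = a₁ * A ^ δ₁ * A ^ (-β) := by rw [mul_assoc, ← rpow_add hA, sub_eq_add_neg]
      _ ≤ Φ A * A ^ (-β) := by gcongr
  · have hpow : 1 ≤ A ^ (-β) := one_le_rpow_of_pos_of_le_one_of_nonpos hA hA1.le (by linarith)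
    calc min a₁ T⁻¹ ≤ Φ A := (min_le_right _ _).trans hΦA
      _ ≤ Φ A * A ^ (-β) := le_mul_of_one_le_right ((inv_pos.2 hT).le.trans hΦA) hpow

end LowerScaling

lemma integral_rhogb_eq {d : ℕ} (hd : 1 ≤ d) (Φ Φinv : ℝ → ℝ) (γ β t : ℝ) :
    ∫ x, rhogb d Φ Φinv γ β t x = Φinv t⁻¹ ^ (-γ) *
      (d * volume.real (Metric.ball (0 : EuclideanSpace ℝ (Fin d)) 1) *
        ∫ y in Ioi (0 : ℝ), y ^ (d - 1) *
          (min (y ^ β) 1 * (Φ ((Φinv t⁻¹)⁻¹ + y)⁻¹ / ((Φinv t⁻¹)⁻¹ + y) ^ d))) := by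
  rw [← integral_comp_norm_euclideanSpace hd, ← integral_const_mul]
  simp only [rhogb, mul_assoc]

theorem stmt_14_general (d : ℕ) (hd : 1 ≤ d) (Φ Φinv : ℝ → ℝ) (a₁ δ₁ : ℝ)
    (hδ₁ : 0 < δ₁) (ha₁ : 0 < a₁)
    (hΦpos : ∀ t : ℝ, 0 < t → 0 < Φ t)
    (hΦ1 : Φ 1 = 1)
    (hinvpos : ∀ r : ℝ, 0 < r → 0 < Φinv r)
    (hright : ∀ r : ℝ, 0 < r → Φ (Φinv r) = r)
    (hlow : ∀ lam r : ℝ, 1 ≤ lam → 1 ≤ r → a₁ * lam ^ δ₁ * Φ r ≤ Φ (lam * r))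
    (hC : IntegrableOn (fun r : ℝ => Φ r / r) (Ioo (0 : ℝ) 1))
    (T : ℝ) (hT : 1 ≤ T) :
    ∃ c₁ : ℝ, 0 < c₁ ∧ ∀ t : ℝ, 0 < t → t ≤ T → ∀ β γ : ℝ, 0 ≤ β → β < δ₁ →
      (∫ x : EuclideanSpace ℝ (Fin d), rhogb d Φ Φinv γ β t x) ≤
        c₁ / (δ₁ - β) * (t⁻¹ * Φinv t⁻¹ ^ (-γ - β)) := by
  have hΦnn : ∀ r : ℝ, 0 < r → 0 ≤ Φ r := fun r hr => (hΦpos r hr).le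
  have hT0 : 0 < T := zero_lt_one.trans_le hT
  set C := ∫ r in Ioo (0 : ℝ) 1, Φ r / r
  have hC0 : 0 ≤ C :=
    setIntegral_nonneg measurableSet_Ioo fun r hr => div_nonneg (hΦnn r hr.1) hr.1.le
  set κ := volume.real (Metric.ball (0 : EuclideanSpace ℝ (Fin d)) 1)
  have hκ : 0 < κ := ENNReal.toReal_pos (Metric.measure_ball_pos volume 0 one_pos).ne'
    measure_ball_lt_top.ne
  set K := min a₁ T⁻¹
  have hK : 0 < K := lt_min ha₁ (inv_pos.2 hT0)
  refine ⟨d * κ * (a₁⁻¹ + δ₁ * C / K), by positivity, fun t ht htT β γ hβ hβδ => ?_⟩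
  set A := Φinv t⁻¹
  have hA : 0 < A := hinvpos _ (inv_pos.2 ht)
  have hΦA : Φ A = t⁻¹ := hright _ (inv_pos.2 ht)
  have hKP : K ≤ t⁻¹ * A ^ (-β) := hΦA ▸ min_le_mul_rpow_neg_of_lowerScaling hlow hΦ1 ha₁.le
    hA hβ hβδ.le hT0 (hΦA ▸ inv_anti₀ ht htT)
  have hJ := setIntegral_radial_le hd hΦnn hlow hC ha₁ hA hβ hβδ
  rw [hΦA] at hJ
  have hδβ : 0 < δ₁ - β := sub_pos.2 hβδ
  have hCK : C ≤ δ₁ * C / K * (t⁻¹ * A ^ (-β)) / (δ₁ - β) := by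
    rw [le_div_iff₀ hδβ, div_mul_eq_mul_div, le_div_iff₀ hK]
    nlinarith [mul_le_mul_of_nonneg_left hKP (mul_nonneg hδ₁.le hC0),
      mul_nonneg (mul_nonneg hC0 hβ) hK.le]
  have hJ' := hJ.trans (add_le_add_right hCK _)
  rw [integral_rhogb_eq hd, show -γ - β = -γ + -β by ring, rpow_add hA]
  calc _ ≤ A ^ (-γ) * (d * κ * ((a₁⁻¹ + δ₁ * C / K) * (t⁻¹ * A ^ (-β)) / (δ₁ - β))) := by
        gcongr
        exact hJ'.trans_eq (by ring)
    _ = _ := by ring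

/-- Under weak lower scaling and `∫₀¹ Φ(r)/r dr < ∞`, for every `T ≥ 1`
there exists `c₁ > 0` such that for all `0 < t ≤ T`, `β ∈ [0, δ₁)` and `γ ∈ ℝ`:
`∫_{ℝ^d} ρ_γ^β(t,x) dx ≤ (c₁/(δ₁−β)) t⁻¹ Φ⁻¹(t⁻¹)^{-γ−β}`. -/
theorem stmt_14 (d : ℕ) (hd : 1 ≤ d) (Φ Φinv : ℝ → ℝ) (a₁ δ₁ : ℝ)
    (hδ₁ : 0 < δ₁) (hδ₂ : δ₁ ≤ 2) (ha₁ : 0 < a₁) (ha₂ : a₁ < 1)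
    (hΦpos : ∀ t : ℝ, 0 < t → 0 < Φ t)
    (hΦmono : ∀ s t : ℝ, 0 < s → s < t → Φ s < Φ t)
    (hΦ1 : Φ 1 = 1)
    (hinvpos : ∀ r : ℝ, 0 < r → 0 < Φinv r)
    (hleft : ∀ t : ℝ, 0 < t → Φinv (Φ t) = t)
    (hright : ∀ r : ℝ, 0 < r → Φ (Φinv r) = r)
    (hup : ∀ lam r : ℝ, 1 ≤ lam → 0 < r → Φ (lam * r) ≤ lam ^ 2 * Φ r)
    (hlow : ∀ lam r : ℝ, 1 ≤ lam → 1 ≤ r → a₁ * lam ^ δ₁ * Φ r ≤ Φ (lam * r))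
    (hC : IntegrableOn (fun r : ℝ => Φ r / r) (Ioo (0 : ℝ) 1))
    (T : ℝ) (hT : 1 ≤ T) :
    ∃ c₁ : ℝ, 0 < c₁ ∧ ∀ t : ℝ, 0 < t → t ≤ T → ∀ β γ : ℝ, 0 ≤ β → β < δ₁ →
      (∫ x : EuclideanSpace ℝ (Fin d), rhogb d Φ Φinv γ β t x) ≤
        c₁ / (δ₁ - β) * (t⁻¹ * Φinv t⁻¹ ^ (-γ - β)) :=
  stmt_14_general d hd Φ Φinv a₁ δ₁ hδ₁ ha₁ hΦpos hΦ1 hinvpos hright hlow hC T hT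
end

section
/- Let j(r) = ∫_{(0,∞)} (4πt)^{-d/2} e^{-r²/(4t)} μ(dt) be the Lévy density of the subordinate Brownian motion with subordinator Laplace exponent φ (Lévy measure μ). Then there exists a constant c = c(d) > 0 such that j(r) ≤ c φ(r^{-2})/r^d for all r > 0; moreover r ↦ j(r) is nonincreasing. -/
/-!
The Gaussian kernel scales as `p_t(r) = r^{-d} p_{t/r²}(1)`, and
`p_s(1) = (4πs)^{-d/2} e^{-1/(4s)}` is at most a multiple of `min s 1` (as `s → 0` the factor
`e^{-1/(4s)}` beats every power of `1/s`), hence of `1 - e^{-s}`. Integrating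
`p_t(r) ≤ c r^{-d} (1 - e^{-t/r²})` against `μ` gives `j(r) ≤ c r^{-d} φ(r^{-2})`.
Monotonicity in `r` holds for each `t` separately.
-/

open Real MeasureTheory Set
open scoped ENNReal

namespace SubordinateBrownianMotion

noncomputable def heatKernel (d : ℕ) (t r : ℝ) : ℝ :=
  (4 * π * t) ^ (-(d : ℝ) / 2) * exp (-(r ^ 2) / (4 * t))

lemma one_sub_exp_neg_le_min (x : ℝ) : 1 - exp (-x) ≤ min x 1 :=
  le_min (by linarith [one_sub_le_exp_neg x]) (by linarith [exp_pos (-x)])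

lemma min_le_two_mul_one_sub_exp_neg {x : ℝ} (hx : 0 ≤ x) : min x 1 ≤ 2 * (1 - exp (-x)) := by
  have h : (1 + x) * exp (-x) ≤ 1 := by
    rw [exp_neg, mul_inv_le_iff₀ (exp_pos x)]
    linarith [add_one_le_exp x]
  rcases le_total x 1 with hx1 | hx1
  · rw [min_eq_left hx1]
    nlinarith [exp_pos (-x)]
  · rw [min_eq_right hx1]
    nlinarith [exp_pos (-x)]

lemma exp_neg_le_factorial_div_pow {x : ℝ} (hx : 0 < x) (n : ℕ) :
    exp (-x) ≤ n.factorial / x ^ n := by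
  rw [exp_neg, inv_le_comm₀ (exp_pos x) (by positivity), inv_div]
  exact pow_div_factorial_le_exp x hx.le n

lemma heatKernel_le_of_one_le (d : ℕ) {t : ℝ} (ht : 1 ≤ t) : heatKernel d t 1 ≤ 1 := by
  have hbase : 1 ≤ 4 * π * t := by nlinarith [pi_gt_three]
  have hpow : (4 * π * t) ^ (-(d : ℝ) / 2) ≤ 1 :=
    rpow_le_one_of_one_le_of_nonpos hbase (by have := d.cast_nonneg (α := ℝ); linarith)
  have hexp : exp (-(1 ^ 2) / (4 * t)) ≤ 1 :=
    exp_le_one_iff.2 (div_nonpos_of_nonpos_of_nonneg (by norm_num) (by positivity))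
  exact mul_le_one₀ hpow (exp_pos _).le hexp

lemma heatKernel_le_of_le_one (d : ℕ) {t : ℝ} (ht : 0 < t) (ht1 : t ≤ 1) :
    heatKernel d t 1 ≤ (d + 1).factorial * 4 ^ (d + 1) * t := by
  have hpow : (4 * π * t) ^ (-(d : ℝ) / 2) ≤ t ^ (-(d : ℝ) / 2) :=
    rpow_le_rpow_of_nonpos ht (by nlinarith [pi_gt_three])
      (by have := d.cast_nonneg (α := ℝ); linarith)
  have hexp : exp (-(1 ^ 2) / (4 * t)) ≤ (d + 1).factorial / (1 / (4 * t)) ^ (d + 1) := by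
    rw [one_pow, neg_div]
    exact exp_neg_le_factorial_div_pow (by positivity) (d + 1)
  have hgain : t ^ (-(d : ℝ) / 2) * t ^ (d + 1) ≤ t := by
    rw [← rpow_natCast, ← rpow_add ht]
    refine (rpow_le_rpow_of_exponent_ge ht ht1 ?_).trans_eq (rpow_one t)
    push_cast
    linarith
  calc heatKernel d t 1
      ≤ t ^ (-(d : ℝ) / 2) * ((d + 1).factorial / (1 / (4 * t)) ^ (d + 1)) :=
        mul_le_mul hpow hexp (exp_pos _).le (rpow_nonneg ht.le _)
    _ = (d + 1).factorial * 4 ^ (d + 1) * (t ^ (-(d : ℝ) / 2) * t ^ (d + 1)) := by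
        rw [one_div, inv_pow, div_inv_eq_mul, mul_pow]
        ring
    _ ≤ (d + 1).factorial * 4 ^ (d + 1) * t := by gcongr

lemma heatKernel_one_le_mul_min (d : ℕ) {t : ℝ} (ht : 0 < t) :
    heatKernel d t 1 ≤ (d + 1).factorial * 4 ^ (d + 1) * min t 1 := by
  have hC : (1 : ℝ) ≤ (d + 1).factorial * 4 ^ (d + 1) :=
    one_le_mul_of_one_le_of_one_le (mod_cast (d + 1).factorial_pos) (one_le_pow₀ (by norm_num))
  rcases le_total t 1 with ht1 | ht1
  · rw [min_eq_left ht1]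
    exact heatKernel_le_of_le_one d ht ht1
  · rw [min_eq_right ht1, mul_one]
    exact (heatKernel_le_of_one_le d ht1).trans hC

lemma heatKernel_eq_div_pow {d : ℕ} {t r : ℝ} (ht : 0 < t) (hr : 0 < r) :
    heatKernel d t r = heatKernel d (t / r ^ 2) 1 / r ^ d := by
  have hscale : (4 * π * t) ^ (-(d : ℝ) / 2) =
      (4 * π * (t / r ^ 2)) ^ (-(d : ℝ) / 2) * (r ^ d)⁻¹ := by
    rw [show 4 * π * t = 4 * π * (t / r ^ 2) * r ^ 2 by field_simp,
      mul_rpow (by positivity) (by positivity), ← rpow_natCast r 2, ← rpow_natCast r d,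
      ← rpow_mul hr.le, ← rpow_neg hr.le]
    ring_nf
  have hexp : -(r ^ 2) / (4 * t) = -(1 ^ 2) / (4 * (t / r ^ 2)) := by
    field_simp
  rw [heatKernel, heatKernel, hscale, hexp]
  ring

lemma heatKernel_le_mul_one_sub_exp (d : ℕ) {t r : ℝ} (ht : 0 < t) (hr : 0 < r) :
    heatKernel d t r ≤
      2 * (d + 1).factorial * 4 ^ (d + 1) / r ^ d * (1 - exp (-((r ^ 2)⁻¹ * t))) := by
  have hs : 0 < t / r ^ 2 := by positivity
  calc heatKernel d t r = heatKernel d (t / r ^ 2) 1 / r ^ d := heatKernel_eq_div_pow ht hr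
    _ ≤ (d + 1).factorial * 4 ^ (d + 1) * min (t / r ^ 2) 1 / r ^ d := by
        gcongr
        exact heatKernel_one_le_mul_min d hs
    _ ≤ (d + 1).factorial * 4 ^ (d + 1) * (2 * (1 - exp (-(t / r ^ 2)))) / r ^ d := by
        gcongr
        exact min_le_two_mul_one_sub_exp_neg hs.le
    _ = 2 * (d + 1).factorial * 4 ^ (d + 1) / r ^ d * (1 - exp (-((r ^ 2)⁻¹ * t))) := by
        rw [div_eq_inv_mul t]
        ring

lemma heatKernel_le_heatKernel {d : ℕ} {t r s : ℝ} (ht : 0 ≤ t) (hr : 0 ≤ r)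
    (hrs : r ≤ s) :
    heatKernel d t s ≤ heatKernel d t r := by
  unfold heatKernel
  gcongr

variable {μ : Measure ℝ}

lemma integrableOn_min_one (hμ : ∫⁻ t in Ioi (0 : ℝ), ENNReal.ofReal (min t 1) ∂μ < ⊤) :
    IntegrableOn (fun t => min t 1) (Ioi 0) μ := by
  refine ⟨(continuous_id.min continuous_const).aestronglyMeasurable, ?_⟩
  rw [hasFiniteIntegral_iff_ofReal]
  · exact hμ
  · filter_upwards [ae_restrict_mem measurableSet_Ioi] with t (ht : 0 < t)
    exact le_min ht.le zero_le_one

lemma integrableOn_one_sub_exp_neg_mul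
    (hμ : ∫⁻ t in Ioi (0 : ℝ), ENNReal.ofReal (min t 1) ∂μ < ⊤) {l : ℝ}
    (hl : 0 ≤ l) :
    IntegrableOn (fun t => 1 - exp (-(l * t))) (Ioi 0) μ := by
  refine Integrable.mono' ((integrableOn_min_one hμ).const_mul (max l 1))
    (by fun_prop) ?_
  filter_upwards [ae_restrict_mem measurableSet_Ioi] with t (ht : 0 < t)
  have hlt : 0 ≤ l * t := mul_nonneg hl ht.le
  rw [Real.norm_of_nonneg (sub_nonneg.2 (exp_le_one_iff.2 (neg_nonpos.2 hlt))),
    mul_min_of_nonneg _ _ (hl.trans (le_max_left l 1)), mul_one]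
  exact (one_sub_exp_neg_le_min (l * t)).trans (min_le_min
    (mul_le_mul_of_nonneg_right (le_max_left l 1) ht.le) (le_max_right l 1))

lemma lintegral_heatKernel_le (d : ℕ)
    (hμ : ∫⁻ t in Ioi (0 : ℝ), ENNReal.ofReal (min t 1) ∂μ < ⊤) {r : ℝ} (hr : 0 < r) :
    ∫⁻ t in Ioi (0 : ℝ), ENNReal.ofReal (heatKernel d t r) ∂μ ≤
      ENNReal.ofReal (2 * (d + 1).factorial * 4 ^ (d + 1) *
        (∫ t in Ioi (0 : ℝ), (1 - exp (-((r ^ 2)⁻¹ * t))) ∂μ) / r ^ d) := by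
  set C : ℝ := 2 * (d + 1).factorial * 4 ^ (d + 1) / r ^ d
  have hint := integrableOn_one_sub_exp_neg_mul hμ (inv_nonneg.2 (sq_nonneg r))
  have hnonneg : 0 ≤ᵐ[μ.restrict (Ioi 0)] fun t => 1 - exp (-((r ^ 2)⁻¹ * t)) := by
    filter_upwards [ae_restrict_mem measurableSet_Ioi] with t (ht : 0 < t)
    exact sub_nonneg.2 (exp_le_one_iff.2 (neg_nonpos.2 (by positivity)))
  calc ∫⁻ t in Ioi (0 : ℝ), ENNReal.ofReal (heatKernel d t r) ∂μ
      ≤ ∫⁻ t in Ioi (0 : ℝ),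
          ENNReal.ofReal C * ENNReal.ofReal (1 - exp (-((r ^ 2)⁻¹ * t))) ∂μ := by
        refine setLIntegral_mono' measurableSet_Ioi fun t (ht : 0 < t) => ?_
        rw [← ENNReal.ofReal_mul (by positivity)]
        exact ENNReal.ofReal_le_ofReal (heatKernel_le_mul_one_sub_exp d ht hr)
    _ = ENNReal.ofReal C *
          ENNReal.ofReal (∫ t in Ioi (0 : ℝ), (1 - exp (-((r ^ 2)⁻¹ * t))) ∂μ) := by
        rw [lintegral_const_mul' _ _ ENNReal.ofReal_ne_top,
          ofReal_integral_eq_lintegral_ofReal hint hnonneg]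
    _ = _ := by
        rw [← ENNReal.ofReal_mul (by positivity)]
        congr 1
        ring

end SubordinateBrownianMotion

open SubordinateBrownianMotion in
theorem stmt_16_general (d : ℕ) (μ : Measure ℝ) (φ : ℝ → ℝ) (j : ℝ → ℝ≥0∞)
    (hμ : ∫⁻ t in Ioi (0 : ℝ), ENNReal.ofReal (min t 1) ∂μ < ⊤)
    (hφ : ∀ l : ℝ, 0 < l → φ l = ∫ t in Ioi (0 : ℝ), (1 - Real.exp (-(l * t))) ∂μ)
    (hj : ∀ r : ℝ, 0 < r →
      j r = ∫⁻ t in Ioi (0 : ℝ),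
        ENNReal.ofReal ((4 * π * t) ^ (-(d : ℝ) / 2) * Real.exp (-(r ^ 2) / (4 * t))) ∂μ) :
    (∃ c : ℝ, 0 < c ∧ ∀ r : ℝ, 0 < r →
        j r ≤ ENNReal.ofReal (c * φ ((r ^ 2)⁻¹) / r ^ d)) ∧
    (∀ r s : ℝ, 0 < r → r ≤ s → j s ≤ j r) := by
  refine ⟨⟨2 * (d + 1).factorial * 4 ^ (d + 1), by positivity, fun r hr => ?_⟩,
    fun r s hr hrs => ?_⟩
  · rw [hj r hr, hφ _ (by positivity)]
    exact lintegral_heatKernel_le d hμ hr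
  · rw [hj r hr, hj s (hr.trans_le hrs)]
    exact setLIntegral_mono' measurableSet_Ioi fun t (ht : 0 < t) =>
      ENNReal.ofReal_le_ofReal (heatKernel_le_heatKernel ht.le hr.le hrs)

/-- Let `j(r) = ∫_{(0,∞)} (4πt)^{-d/2} e^{-r²/(4t)} μ(dt)` be the Lévy
density of the subordinate Brownian motion whose subordinator has Laplace exponent
`φ(λ) = ∫_{(0,∞)}(1 − e^{-λt}) μ(dt)`. Then there exists `c = c(d) > 0` such that
`j(r) ≤ c φ(r^{-2})/r^d` for all `r > 0`; moreover `r ↦ j(r)` is nonincreasing. -/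
theorem stmt_16 (d : ℕ) (hd : 1 ≤ d) (μ : Measure ℝ) (φ : ℝ → ℝ) (j : ℝ → ℝ≥0∞)
    (hμ : ∫⁻ t in Ioi (0 : ℝ), ENNReal.ofReal (min t 1) ∂μ < ⊤)
    (hφ : ∀ l : ℝ, 0 < l → φ l = ∫ t in Ioi (0 : ℝ), (1 - Real.exp (-(l * t))) ∂μ)
    (hj : ∀ r : ℝ, 0 < r →
      j r = ∫⁻ t in Ioi (0 : ℝ),
        ENNReal.ofReal ((4 * π * t) ^ (-(d : ℝ) / 2) * Real.exp (-(r ^ 2) / (4 * t))) ∂μ) :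
    (∃ c : ℝ, 0 < c ∧ ∀ r : ℝ, 0 < r →
        j r ≤ ENNReal.ofReal (c * φ ((r ^ 2)⁻¹) / r ^ d)) ∧
    (∀ r s : ℝ, 0 < r → r ≤ s → j s ≤ j r) :=
  stmt_16_general d μ φ j hμ hφ hj
end
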